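/- Suppose that π : ℕ^{<ℕ} → ℕ^{<ℕ} is a ∧-embedding. Then the restriction of its continuous extension π̂ to ℕ^ℕ, viewed as a map from ℕ^ℕ to ℕ^ℕ, is a closed map (images of closed subsets of ℕ^ℕ are closed in ℕ^ℕ). -/
import Mathlib


open Set Topology TopologicalSpace
open scoped ENNReal

/-- `t` is an initial segment of `b : ℕ → ℕ`. -/
def PrefixFun (t : List ℕ) (b : ℕ → ℕ) : Prop :=
  ∀ (i : ℕ) (h : i < t.length), t.get ⟨i, h⟩ = b i

/-- The meet `s ∧ t`: the longest common initial segment of two finite sequences. -/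
def listMeet : List ℕ → List ℕ → List ℕ
  | a :: s, b :: t => if a = b then a :: listMeet s t else []
  | _, _ => []

/-- A `∧`-embedding: an injection preserving meets. -/
def MeetEmbedding (π : List ℕ → List ℕ) : Prop :=
  Function.Injective π ∧ ∀ s t, π (listMeet s t) = listMeet (π s) (π t)

/-- The induced map on Baire space: `limSeq π b = ⋃ i, π (b ↾ i)`. -/
def limSeq (π : List ℕ → List ℕ) (b : ℕ → ℕ) : ℕ → ℕ := fun n =>
  (π (List.ofFn fun i : Fin (n + 1) => b i)).getD n 0

/-- Points of the space `ℕ^{≤ℕ}_*`: finite sequences, infinite sequences, and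
finite sequences followed by `∞`. -/
inductive NStar : Type
  | fin : List ℕ → NStar
  | inf : (ℕ → ℕ) → NStar
  | lim : List ℕ → NStar

namespace NStar

/-- `t ⊑ c`. -/
def PrefixOf (t : List ℕ) : NStar → Prop
  | fin s => t <+: s
  | inf b => PrefixFun t b
  | lim s => t <+: s

/-- The basic "cylinder" `N_t = {c | t ⊑ c}`. -/
def cyl (t : List ℕ) : Set NStar := {c | PrefixOf t c}

/-- The smallest topology in which every `{t}` and every `N_t` is clopen. -/
instance : TopologicalSpace NStar :=
  TopologicalSpace.generateFrom
    {S | ∃ t : List ℕ, S = {fin t} ∨ S = ({fin t} : Set NStar)ᶜ ∨ S = cyl t ∨ S = (cyl t)ᶜ}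

def IsFin (c : NStar) : Prop := ∃ t, c = fin t
def IsInf (c : NStar) : Prop := ∃ b, c = inf b
def IsLim (c : NStar) : Prop := ∃ t, c = lim t

/-- The extension of `π : ℕ^{<ℕ} → ℕ^{<ℕ}` to `ℕ^{≤ℕ}_*`. -/
def hat (π : List ℕ → List ℕ) : NStar → NStar
  | fin t => fin (π t)
  | inf b => inf (limSeq π b)
  | lim t => lim (π t)

end NStar

/-- `ℕ^ℕ_* = ℕ^{≤ℕ}_* ∖ ℕ^{<ℕ}`. -/
abbrev NNStar : Type := {c : NStar // ¬ c.IsFin}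
/-- `ℕ^ℕ_* ∖ ℕ^ℕ = {t⌢⟨∞⟩ : t ∈ ℕ^{<ℕ}}`. -/
abbrev NLim : Type := {c : NStar // c.IsLim}
/-- The copy of `ℕ^{<ℕ}` inside `ℕ^{≤ℕ}_*` (a discrete subspace). -/
abbrev NFin : Type := {c : NStar // c.IsFin}
/-- `ℕ^{≤ℕ} = ℕ^{<ℕ} ∪ ℕ^ℕ`. -/
abbrev NFinInf : Type := {c : NStar // ¬ c.IsLim}
/-- `ℕ^{≤ℕ}_* ∖ ℕ^ℕ`. -/
abbrev NFinLim : Type := {c : NStar // ¬ c.IsInf}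

def infPt (b : ℕ → ℕ) : NNStar :=
  ⟨NStar.inf b, by rintro ⟨t, h⟩; exact NStar.noConfusion h⟩

def limPt (t : List ℕ) : NLim := ⟨NStar.lim t, t, rfl⟩

def finPt (t : List ℕ) : NFin := ⟨NStar.fin t, t, rfl⟩

/-- The extension `π̂` restricted to `ℕ^ℕ_*`. -/
def hatNN (π : List ℕ → List ℕ) (c : NNStar) : NNStar :=
  ⟨c.1.hat π, by
    obtain ⟨c, hc⟩ := c
    cases c with
    | fin t => exact fun _ => hc ⟨t, rfl⟩
    | inf b => rintro ⟨t, h⟩; exact NStar.noConfusion h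
    | lim t => rintro ⟨s, h⟩; exact NStar.noConfusion h⟩

/-- The extension `π̂` restricted to `ℕ^ℕ_* ∖ ℕ^ℕ`. -/
def hatLim (π : List ℕ → List ℕ) (c : NLim) : NLim :=
  ⟨c.1.hat π, by obtain ⟨c, t, rfl⟩ := c; exact ⟨π t, rfl⟩⟩

def NLim.toNN (c : NLim) : NNStar :=
  ⟨c.1, by obtain ⟨c, t, rfl⟩ := c; rintro ⟨s, h⟩; exact NStar.noConfusion h⟩

def NLim.base (c : NLim) : List ℕ :=
  match c.1 with
  | .lim t => t
  | .fin t => t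
  | .inf _ => []

/-- The map `p : t⌢⟨∞⟩ ↦ t`, with values in the discrete copy of `ℕ^{<ℕ}`. -/
def pFin (c : NLim) : NFin := finPt c.base

def NFin.toFinLim (c : NFin) : NFinLim :=
  ⟨c.1, by obtain ⟨c, t, rfl⟩ := c; rintro ⟨b, h⟩; exact NStar.noConfusion h⟩

def NFin.toFinInf (c : NFin) : NFinInf :=
  ⟨c.1, by obtain ⟨c, t, rfl⟩ := c; rintro ⟨s, h⟩; exact NStar.noConfusion h⟩

/-- A closed continuous embedding of `φ` into `φ'`: a pair of injective continuous closed
maps `πX : X → X'` and `πY : cl(φ[X]) → cl(φ'[X'])` with `φ' ∘ πX = πY ∘ φ`. -/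
def ClosedContinuousEmbedding {X Y X' Y' : Type*} [TopologicalSpace X] [TopologicalSpace Y]
    [TopologicalSpace X'] [TopologicalSpace Y'] (φ : X → Y) (φ' : X' → Y') : Prop :=
  ∃ (πX : X → X') (πY : closure (Set.range φ) → closure (Set.range φ')),
    Continuous πX ∧ Function.Injective πX ∧ IsClosedMap πX ∧
    Continuous πY ∧ Function.Injective πY ∧ IsClosedMap πY ∧
    ∀ x : X, φ' (πX x) = (πY ⟨φ x, subset_closure ⟨x, rfl⟩⟩ : Y')

/-- A topological space is analytic if it is a continuous image of a closed subset of `ℕ^ℕ`. -/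
def IsAnalytic (X : Type*) [TopologicalSpace X] : Prop :=
  ∃ C : Set (ℕ → ℕ), IsClosed C ∧ ∃ f : C → X, Continuous f ∧ Function.Surjective f

/-- Baire measurable: preimages of open sets have the Baire property. -/
def BaireMeasurableFun {X Y : Type*} [TopologicalSpace X] [TopologicalSpace Y]
    (φ : X → Y) : Prop :=
  ∀ V : Set Y, IsOpen V → ∃ U : Set X, IsOpen U ∧ IsMeagre (symmDiff (φ ⁻¹' V) U)

/-- Baire class one: preimages of open sets are `Fσ`. -/
def BaireClassOneFun {X Y : Type*} [TopologicalSpace X] [TopologicalSpace Y]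
    (φ : X → Y) : Prop :=
  ∀ V : Set Y, IsOpen V → ∃ F : ℕ → Set X, (∀ n, IsClosed (F n)) ∧ φ ⁻¹' V = ⋃ n, F n

/-- σ-continuous with closed witnesses. -/
def SigmaContClosed {X Y : Type*} [TopologicalSpace X] [TopologicalSpace Y]
    (φ : X → Y) : Prop :=
  ∃ F : ℕ → Set X, (∀ n, IsClosed (F n)) ∧ (⋃ n, F n) = Set.univ ∧ ∀ n, ContinuousOn φ (F n)

/-- Borel: preimages of open sets are Borel. -/
def BorelFun {X Y : Type*} [TopologicalSpace X] [TopologicalSpace Y] (φ : X → Y) : Prop :=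
  ∀ V : Set Y, IsOpen V → @MeasurableSet X (borel X) (φ ⁻¹' V)

/-- The function on `ℕ^ℕ_*` agreeing with `f` on `ℕ^ℕ` and with `g` on `ℕ^ℕ_* ∖ ℕ^ℕ`,
with values in the topological disjoint union. -/
def combine2 {A B : Type*} (f : (ℕ → ℕ) → A) (g : NLim → B) : NNStar → A ⊕ B := fun c =>
  match c with
  | ⟨.fin t, h⟩ => absurd ⟨t, rfl⟩ h
  | ⟨.inf b, _⟩ => Sum.inl (f b)
  | ⟨.lim t, _⟩ => Sum.inr (g (limPt t))

section Aux6

/-- Prefix of `b` of length `k`, defined recursively. -/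
private def preB (b : ℕ → ℕ) : ℕ → List ℕ
  | 0 => []
  | k + 1 => preB b k ++ [b k]

private lemma preB_eq_ofFn (b : ℕ → ℕ) (k : ℕ) :
    preB b k = List.ofFn (fun i : Fin k => b i) := by
  induction k with
  | zero => rfl
  | succ k ih =>
    rw [List.ofFn_succ', List.concat_eq_append]
    show preB b k ++ [b k] = _
    rw [ih]
    simp

private lemma length_preB (b : ℕ → ℕ) (k : ℕ) : (preB b k).length = k := by
  induction k with
  | zero => rfl
  | succ k ih => show (preB b k ++ [b k]).length = k + 1; simp [ih]

private lemma preB_prefix (b : ℕ → ℕ) {k m : ℕ} (hk : k ≤ m) : preB b k <+: preB b m := by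
  induction m with
  | zero => simp_all
  | succ m ih =>
    rcases Nat.lt_or_ge k (m + 1) with hlt | hge
    · exact (ih (Nat.lt_succ_iff.mp hlt)).trans ⟨[b m], rfl⟩
    · have : k = m + 1 := le_antisymm hk hge
      subst this; exact List.prefix_rfl

private lemma getD_preB (b : ℕ → ℕ) {q k : ℕ} (hq : q < k) : (preB b k).getD q 0 = b q := by
  induction k with
  | zero => omega
  | succ k ih =>
    show (preB b k ++ [b k]).getD q 0 = b q
    rcases Nat.lt_or_ge q k with hlt | hge
    · rw [List.getD_append _ _ _ _ (by rw [length_preB]; exact hlt)]; exact ih hlt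
    · have hq' : q = k := by omega
      subst hq'
      rw [List.getD_append_right _ _ _ _ (by rw [length_preB])]
      simp [length_preB]

private lemma prefix_getD {u v : List ℕ} (h : u <+: v) {q : ℕ} (hq : q < u.length) :
    v.getD q 0 = u.getD q 0 := by
  obtain ⟨w, rfl⟩ := h
  exact List.getD_append _ _ _ _ hq

private lemma preB_congr {b x : ℕ → ℕ} {k : ℕ} (h : ∀ q < k, b q = x q) :
    preB b k = preB x k := by
  induction k with
  | zero => rfl
  | succ k ih =>
    show preB b k ++ [b k] = preB x k ++ [x k]
    rw [ih (fun q hq => h q (by omega)), h k (by omega)]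

private lemma listMeet_prefix_left : ∀ s t : List ℕ, listMeet s t <+: s
  | [], t => by cases t <;> exact List.prefix_rfl
  | a :: s, [] => by exact List.nil_prefix
  | a :: s, b :: t => by
    by_cases hab : a = b
    · show (if a = b then a :: listMeet s t else []) <+: a :: s
      rw [if_pos hab]
      exact List.cons_prefix_cons.mpr ⟨rfl, listMeet_prefix_left s t⟩
    · show (if a = b then a :: listMeet s t else []) <+: a :: s
      rw [if_neg hab]; exact List.nil_prefix

private lemma listMeet_prefix_right : ∀ s t : List ℕ, listMeet s t <+: t
  | [], t => by cases t <;> exact List.nil_prefix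
  | a :: s, [] => by exact List.prefix_rfl
  | a :: s, b :: t => by
    by_cases hab : a = b
    · show (if a = b then a :: listMeet s t else []) <+: b :: t
      rw [if_pos hab, hab]
      exact List.cons_prefix_cons.mpr ⟨rfl, listMeet_prefix_right s t⟩
    · show (if a = b then a :: listMeet s t else []) <+: b :: t
      rw [if_neg hab]; exact List.nil_prefix

private lemma prefix_listMeet : ∀ (w s t : List ℕ), w <+: s → w <+: t → w <+: listMeet s t
  | [], _, _, _, _ => List.nil_prefix
  | x :: w, s, t, hs, ht => by
    obtain ⟨s', rfl⟩ := hs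
    obtain ⟨t', rfl⟩ := ht
    show (x :: w) <+: listMeet (x :: (w ++ s')) (x :: (w ++ t'))
    show (x :: w) <+: (if x = x then x :: listMeet (w ++ s') (w ++ t') else [])
    rw [if_pos rfl]
    exact List.cons_prefix_cons.mpr
      ⟨rfl, prefix_listMeet w _ _ ⟨s', rfl⟩ ⟨t', rfl⟩⟩

private lemma listMeet_eq_left {s t : List ℕ} (h : s <+: t) : listMeet s t = s :=
  (listMeet_prefix_left s t).eq_of_length_le
    (prefix_listMeet s s t List.prefix_rfl h).length_le

private lemma listMeet_append_ne : ∀ (s : List ℕ) {c c' : ℕ}, c ≠ c' →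
    listMeet (s ++ [c]) (s ++ [c']) = s
  | [], c, c', h => by
    show (if c = c' then c :: listMeet [] [] else []) = []
    rw [if_neg h]
  | a :: s, c, c', h => by
    show (if a = a then a :: listMeet (s ++ [c]) (s ++ [c']) else []) = a :: s
    rw [if_pos rfl, listMeet_append_ne s h]

private lemma getD_ne_of_meet {u v : List ℕ}
    (hu : (listMeet u v).length < u.length) (hv : (listMeet u v).length < v.length) :
    u.getD (listMeet u v).length 0 ≠ v.getD (listMeet u v).length 0 := by
  set w := listMeet u v with hw
  obtain ⟨r, hr⟩ := listMeet_prefix_left u v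
  obtain ⟨r', hr'⟩ := listMeet_prefix_right u v
  rw [← hw] at hr hr'
  cases r with
  | nil => rw [← hr] at hu; simp at hu
  | cons x rr =>
    cases r' with
    | nil => rw [← hr'] at hv; simp at hv
    | cons y rr' =>
      have hx : u.getD w.length 0 = x := by
        rw [← hr, List.getD_append_right _ _ _ _ le_rfl]; simp
      have hy : v.getD w.length 0 = y := by
        rw [← hr', List.getD_append_right _ _ _ _ le_rfl]; simp
      rw [hx, hy]
      intro hxy
      subst hxy
      have h1 : (w ++ [x]) <+: u := ⟨rr, by rw [← hr]; simp⟩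
      have h2 : (w ++ [x]) <+: v := ⟨rr', by rw [← hr']; simp⟩
      have := (prefix_listMeet _ _ _ h1 h2).length_le
      rw [← hw] at this
      simp at this

section WithPi

variable {π : List ℕ → List ℕ}

private lemma pi_mono (h : MeetEmbedding π) {s t : List ℕ} (hst : s <+: t) : π s <+: π t := by
  have h2 := h.2 s t
  rw [listMeet_eq_left hst] at h2
  rw [h2]
  exact listMeet_prefix_right _ _

private lemma pi_len_lt (h : MeetEmbedding π) {s t : List ℕ} (hst : s <+: t) (hne : s ≠ t) :
    (π s).length < (π t).length := by
  have hp := pi_mono h hst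
  refine lt_of_le_of_ne hp.length_le (fun he => hne (h.1 (hp.eq_of_length he)))

private lemma pi_preB_len (h : MeetEmbedding π) (b : ℕ → ℕ) (k : ℕ) : k ≤ (π (preB b k)).length := by
  induction k with
  | zero => exact Nat.zero_le _
  | succ k ih =>
    have : (π (preB b k)).length < (π (preB b (k + 1))).length := by
      refine pi_len_lt h ⟨[b k], rfl⟩ (fun he => ?_)
      have := congrArg List.length he
      rw [length_preB, length_preB] at this
      omega
    omega

/-- `u` agrees with `a` on all of its positions, i.e. `u ⊑ a`. -/
private def Agrees (a : ℕ → ℕ) (u : List ℕ) : Prop :=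
  ∀ q < u.length, u.getD q 0 = a q

private lemma agrees_prefix {a : ℕ → ℕ} {u v : List ℕ} (hu : Agrees a u) (hv : Agrees a v)
    (hl : u.length ≤ v.length) : u <+: v := by
  rw [List.prefix_iff_eq_take]
  apply List.ext_getElem
  · rw [List.length_take]; omega
  · intro i h1 h2
    have hiu : i < u.length := h1
    have hiv : i < v.length := by omega
    rw [List.getElem_take]
    have e1 := hu i hiu
    have e2 := hv i hiv
    rw [List.getD_eq_getElem _ _ hiu] at e1
    rw [List.getD_eq_getElem _ _ hiv] at e2
    rw [e1, e2]

private lemma comp_of_agrees (h : MeetEmbedding π) {a : ℕ → ℕ} {u v : List ℕ}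
    (hu : Agrees a (π u)) (hv : Agrees a (π v)) (hl : u.length ≤ v.length) : u <+: v := by
  rcases le_total (π u).length (π v).length with h1 | h1
  · have hp : π u <+: π v := agrees_prefix hu hv h1
    have h2 : π (listMeet u v) = π u := by rw [h.2, listMeet_eq_left hp]
    have h3 := h.1 h2
    rw [← h3]
    exact listMeet_prefix_right u v
  · have hp : π v <+: π u := agrees_prefix hv hu h1
    have h2 : π (listMeet v u) = π v := by rw [h.2, listMeet_eq_left hp]
    have h3 := h.1 h2
    have hvu : v <+: u := h3 ▸ listMeet_prefix_right v u
    rw [hvu.eq_of_length_le hl]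

private lemma eq_of_agrees (h : MeetEmbedding π) {a : ℕ → ℕ} {u v : List ℕ}
    (hu : Agrees a (π u)) (hv : Agrees a (π v)) (hl : u.length = v.length) : u = v :=
  (comp_of_agrees h hu hv hl.le).eq_of_length hl

private lemma limSeq_getD (h : MeetEmbedding π) (b : ℕ → ℕ) (k q : ℕ) (hq : q < (π (preB b k)).length) :
    limSeq π b q = (π (preB b k)).getD q 0 := by
  show (π (List.ofFn fun i : Fin (q + 1) => b i)).getD q 0 = _
  rw [← preB_eq_ofFn]
  rcases le_total (q + 1) k with hk | hk
  · exact (prefix_getD (pi_mono h (preB_prefix b hk))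
      (lt_of_lt_of_le (Nat.lt_succ_self q) (pi_preB_len h b (q + 1)))).symm
  · exact prefix_getD (pi_mono h (preB_prefix b hk)) hq

end WithPi

end Aux6

/-- the restriction of `π̂` to Baire space is a closed map. -/
theorem stmt_6 (π : List ℕ → List ℕ) (h : MeetEmbedding π) :
    IsClosedMap (limSeq π) := by
  classical
  intro C hC
  apply isClosed_of_closure_subset
  intro a ha
  by_cases hgood : ∀ k, ∃ b, b ∈ C ∧ Agrees a (π (preB b k))
  · -- Case 1: arbitrarily long pieces of `C` map into prefixes of `a`.
    choose β hβC hβA using hgood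
    have hchain : ∀ {k m : ℕ}, k ≤ m → preB (β k) k <+: preB (β m) m := by
      intro k m hk
      exact comp_of_agrees h (hβA k) (hβA m) (by rw [length_preB, length_preB]; exact hk)
    set b : ℕ → ℕ := fun n => β (n + 1) n with hbdef
    have hcoord : ∀ q k, q < k → β k q = b q := by
      intro q k hqk
      have h1 : preB (β (q + 1)) (q + 1) <+: preB (β k) k := hchain hqk
      have h2 := prefix_getD (q := q) h1 (by rw [length_preB]; omega)
      rw [getD_preB _ hqk, getD_preB _ (Nat.lt_succ_self q)] at h2
      exact h2
    have hpre : ∀ k, preB b k = preB (β k) k := by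
      intro k
      exact preB_congr (fun q hq => (hcoord q k hq).symm)
    have hbC : b ∈ C := by
      have ht : Filter.Tendsto (fun k => β k) Filter.atTop (nhds b) := by
        rw [tendsto_pi_nhds]
        intro q
        refine Filter.Tendsto.congr' ?_ (tendsto_const_nhds (x := b q))
        filter_upwards [Filter.eventually_ge_atTop (q + 1)] with k hk
        exact (hcoord q k hk).symm
      exact hC.mem_of_tendsto ht (Filter.Eventually.of_forall hβC)
    refine ⟨b, hbC, ?_⟩
    funext q
    have hl : q < (π (preB b (q + 1))).length :=
      lt_of_lt_of_le (Nat.lt_succ_self q) (pi_preB_len h b (q + 1))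
    rw [limSeq_getD h b (q + 1) q hl, hpre (q + 1)]
    refine hβA (q + 1) q ?_
    rw [hpre (q + 1)] at hl
    exact hl
  · -- Case 2: contradiction with `a` being in the closure of the image.
    exfalso
    push_neg at hgood
    obtain ⟨J, hJ⟩ := hgood
    -- Key claim: per level `n`, a uniform bound on a disagreement position.
    have claim : ∀ n, ∃ K, ∀ b ∈ C, ¬ Agrees a (π (preB b n)) →
        (∀ m < n, Agrees a (π (preB b m))) → ∃ q ≤ K, limSeq π b q ≠ a q := by
      intro n
      cases n with
      | zero =>
        refine ⟨(π (preB (fun _ => 0) 0)).length, ?_⟩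
        intro b hbC hn _
        have hb0 : preB b 0 = preB (fun _ => 0) 0 := rfl
        rw [hb0] at hn
        simp only [Agrees, not_forall] at hn
        obtain ⟨q, hq, hne⟩ := hn
        refine ⟨q, le_of_lt hq, ?_⟩
        rw [limSeq_getD h b 0 q (hb0 ▸ hq), hb0]
        exact hne
      | succ j =>
        by_cases hx : ∃ b₀, b₀ ∈ C ∧ ¬ Agrees a (π (preB b₀ (j + 1))) ∧
            Agrees a (π (preB b₀ j)) ∧
            (π (preB b₀ (j + 1))).getD (π (preB b₀ j)).length 0 = a ((π (preB b₀ j)).length)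
        · obtain ⟨b₀, hb₀C, hnb₀, hab₀, heq₀⟩ := hx
          have hex₀ : ∃ q, q < (π (preB b₀ (j + 1))).length ∧
              (π (preB b₀ (j + 1))).getD q 0 ≠ a q := by
            simp only [Agrees, not_forall] at hnb₀
            obtain ⟨q, hq, hne⟩ := hnb₀
            exact ⟨q, hq, hne⟩
          refine ⟨Nat.find hex₀, ?_⟩
          intro b hbC hnb hprev
          have hj : Agrees a (π (preB b j)) := hprev j (Nat.lt_succ_self j)
          have hsame : preB b j = preB b₀ j :=
            eq_of_agrees h hj hab₀ (by rw [length_preB, length_preB])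
          set p := (π (preB b j)).length with hp
          have hplt : p < (π (preB b (j + 1))).length := by
            refine pi_len_lt h ⟨[b j], rfl⟩ (fun he => ?_)
            have := congrArg List.length he
            rw [length_preB, length_preB] at this
            omega
          obtain ⟨hq₀len, hq₀ne⟩ := Nat.find_spec hex₀
          by_cases hcp : (π (preB b (j + 1))).getD p 0 = a p
          · -- matching next value forces `b (j) = b₀ (j)`.
            have hbj : b j = b₀ j := by
              by_contra hne
              have hmeet : listMeet (preB b (j + 1)) (preB b₀ (j + 1)) = preB b j := by
                show listMeet (preB b j ++ [b j]) (preB b₀ j ++ [b₀ j]) = preB b j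
                rw [← hsame]
                exact listMeet_append_ne _ hne
              have hmeetπ : listMeet (π (preB b (j + 1))) (π (preB b₀ (j + 1)))
                  = π (preB b j) := by rw [← h.2, hmeet]
              have hplt₀ : p < (π (preB b₀ (j + 1))).length := by
                have : (π (preB b₀ j)).length < (π (preB b₀ (j + 1))).length := by
                  refine pi_len_lt h ⟨[b₀ j], rfl⟩ (fun he => ?_)
                  have := congrArg List.length he
                  rw [length_preB, length_preB] at this
                  omega
                rw [hp, hsame]
                exact this
              have hdiff := getD_ne_of_meet (u := π (preB b (j + 1)))
                (v := π (preB b₀ (j + 1))) (by rw [hmeetπ]; exact hplt)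
                (by rw [hmeetπ]; exact hplt₀)
              rw [hmeetπ] at hdiff
              apply hdiff
              rw [← hp, hcp, hp, hsame]
              exact heq₀.symm
            have hpre11 : preB b (j + 1) = preB b₀ (j + 1) := by
              show preB b j ++ [b j] = preB b₀ j ++ [b₀ j]
              rw [hsame, hbj]
            refine ⟨Nat.find hex₀, le_rfl, ?_⟩
            rw [limSeq_getD h b (j + 1) (Nat.find hex₀) (by rw [hpre11]; exact hq₀len),
              hpre11]
            exact hq₀ne
          · -- disagreement already at position `p`.
            refine ⟨p, ?_, ?_⟩
            · by_contra hlt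
              push_neg at hlt
              have hq₀lt : Nat.find hex₀ < (π (preB b₀ j)).length := by
                rw [← hsame, ← hp]; exact hlt
              have := prefix_getD (pi_mono h (⟨[b₀ j], rfl⟩ :
                preB b₀ j <+: preB b₀ (j + 1))) hq₀lt
              apply hq₀ne
              rw [this]
              exact hab₀ _ hq₀lt
            · rw [limSeq_getD h b (j + 1) p hplt]
              exact hcp
        · by_cases hx2 : ∃ b₁, b₁ ∈ C ∧ Agrees a (π (preB b₁ j))
          · obtain ⟨b₁, hb₁C, hab₁⟩ := hx2
            refine ⟨(π (preB b₁ j)).length, ?_⟩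
            intro b hbC hnb hprev
            have hj : Agrees a (π (preB b j)) := hprev j (Nat.lt_succ_self j)
            have hsame : preB b j = preB b₁ j :=
              eq_of_agrees h hj hab₁ (by rw [length_preB, length_preB])
            set p := (π (preB b j)).length with hp
            have hplt : p < (π (preB b (j + 1))).length := by
              refine pi_len_lt h ⟨[b j], rfl⟩ (fun he => ?_)
              have := congrArg List.length he
              rw [length_preB, length_preB] at this
              omega
            have hcp : (π (preB b (j + 1))).getD p 0 ≠ a p := by
              intro hcp
              exact hx ⟨b, hbC, hnb, hj, by rw [← hp]; exact hcp⟩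
            refine ⟨p, by rw [hp, hsame], ?_⟩
            rw [limSeq_getD h b (j + 1) p hplt]
            exact hcp
          · refine ⟨0, ?_⟩
            intro b hbC hnb hprev
            exact absurd ⟨b, hbC, hprev j (Nat.lt_succ_self j)⟩ hx2
    choose Kf hKf using claim
    set K := (Finset.range (J + 1)).sup Kf with hK
    have hbound : ∀ b ∈ C, ∃ q ≤ K, limSeq π b q ≠ a q := by
      intro b hbC
      have hex : ∃ n, ¬ Agrees a (π (preB b n)) := ⟨J, hJ b hbC⟩
      have hnJ : Nat.find hex ≤ J := Nat.find_min' hex (hJ b hbC)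
      obtain ⟨q, hqK, hne⟩ := hKf (Nat.find hex) b hbC (Nat.find_spec hex)
        (fun m hm => of_not_not (Nat.find_min hex hm))
      refine ⟨q, le_trans hqK ?_, hne⟩
      exact Finset.le_sup (Finset.mem_range.mpr (by omega))
    have hU : IsOpen {x : ℕ → ℕ | ∀ q ≤ K, x q = a q} := by
      have hUeq : {x : ℕ → ℕ | ∀ q ≤ K, x q = a q}
          = ⋂ q ∈ Finset.range (K + 1), (fun x : ℕ → ℕ => x q) ⁻¹' {a q} := by
        ext x
        simp [Nat.lt_succ_iff]
      rw [hUeq]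
      exact isOpen_biInter_finset fun q _ =>
        (continuous_apply q).isOpen_preimage _ (isOpen_discrete _)
    obtain ⟨y, hyU, hyim⟩ := mem_closure_iff.mp ha _ hU (fun q _ => rfl)
    obtain ⟨b, hbC, rfl⟩ := hyim
    obtain ⟨q, hqK, hne⟩ := hbound b hbC
    exact hne (hyU q hqK)
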